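/- Let ℓ ≥ 3 and let k, n be positive integers satisfying ∑_{i=0}^{k} (n+i)^ℓ = ∑_{i=k+1}^{2k} (n+i)^ℓ, and set w = n + k, K = k(k+1), a = (ℓ−1)(ℓ−2)/(12ℓ). Then w ≥ ℓK + (11/12)·a (an inequality of real numbers). -/

import Mathlib

/-!
With `W = n + k` the equation reads `W^ℓ = ∑_{j=1}^k ((W + j)^ℓ - (W - j)^ℓ)`. Keeping only the
`j` and `j³` terms of each binomial expansion and using `∑ j = K/2`, `∑ j³ = K²/4` gives
`W³ ≥ ℓK W² + C(ℓ,3) K²/2`, i.e. `W² (W - ℓK) ≥ (ℓK)² a`. Hence `W ≥ ℓK`; and if `W - ℓK` were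
below `11a/12 ≤ 11ℓK/288`, then `W ≤ (299/288) ℓK` and so `W - ℓK ≥ (288/299)² a > 11a/12`.
-/

open Finset

theorem Nat.cast_choose_three (m : ℕ) : (m.choose 3 : ℝ) = m * (m - 1) * (m - 2) / 6 := by
  induction m with
  | zero => simp
  | succ m ih => rw [Nat.choose_succ_succ', Nat.cast_add, ih, Nat.cast_choose_two]; push_cast; ring

theorem add_pow_sub_sub_pow {R : Type*} [CommRing R] (x y : R) (m : ℕ) :
    (x + y) ^ m - (x - y) ^ m =
      ∑ i ∈ range (m + 1), (1 - (-1) ^ i) * y ^ i * x ^ (m - i) * m.choose i := by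
  rw [add_comm x y, sub_eq_neg_add x y, add_pow, add_pow, ← sum_sub_distrib]
  refine sum_congr rfl fun i _ => ?_
  rw [neg_pow]
  ring

theorem add_pow_sub_sub_pow_ge {R : Type*} [CommRing R] [LinearOrder R] [IsStrictOrderedRing R]
    {x y : R} (hx : 0 ≤ x) (hy : 0 ≤ y) {m : ℕ} (hm : 3 ≤ m) :
    2 * m * y * x ^ (m - 1) + 2 * m.choose 3 * y ^ 3 * x ^ (m - 3) ≤
      (x + y) ^ m - (x - y) ^ m := by
  have hterm (i : ℕ) : 0 ≤ (1 - (-1 : R) ^ i) * y ^ i * x ^ (m - i) * m.choose i := by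
    have : 0 ≤ 1 - (-1 : R) ^ i := by
      rcases neg_one_pow_eq_or R i with h | h <;> rw [h] <;> norm_num
    positivity
  have hsub : ({1, 3} : Finset ℕ) ⊆ range (m + 1) := by
    intro i hi
    simp only [mem_insert, mem_singleton] at hi
    rw [mem_range]
    omega
  rw [add_pow_sub_sub_pow]
  convert sum_le_sum_of_subset_of_nonneg hsub fun i _ _ => hterm i using 1
  rw [sum_pair (by norm_num)]
  norm_num
  ring

theorem sum_range_cast_add_one (k : ℕ) : ∑ j ∈ range k, ((j : ℝ) + 1) = (k : ℝ) * (k + 1) / 2 := by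
  induction k with
  | zero => simp
  | succ k ih => rw [sum_range_succ, ih]; push_cast; ring

theorem sum_range_cast_add_one_pow_three (k : ℕ) :
    ∑ j ∈ range k, ((j : ℝ) + 1) ^ 3 = ((k : ℝ) * (k + 1) / 2) ^ 2 := by
  induction k with
  | zero => simp
  | succ k ih => rw [sum_range_succ, ih]; push_cast; ring

theorem sum_add_pow_sub_sub_pow_ge {x : ℝ} (hx : 0 ≤ x) {m : ℕ} (hm : 3 ≤ m) (k : ℕ) :
    m * (k * (k + 1 : ℝ)) * x ^ (m - 1) + m.choose 3 * (k * (k + 1 : ℝ)) ^ 2 / 2 * x ^ (m - 3) ≤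
      ∑ j ∈ range k, ((x + (j + 1)) ^ m - (x - (j + 1)) ^ m) := by
  calc _ = ∑ j ∈ range k, (2 * m * ((j : ℝ) + 1) * x ^ (m - 1) +
          2 * m.choose 3 * ((j : ℝ) + 1) ^ 3 * x ^ (m - 3)) := by
        rw [sum_add_distrib, ← sum_mul, ← sum_mul, ← mul_sum, ← mul_sum, sum_range_cast_add_one,
          sum_range_cast_add_one_pow_three]
        ring
    _ ≤ _ := sum_le_sum fun j _ => add_pow_sub_sub_pow_ge hx (by positivity) hm

theorem pow_eq_sum_add_pow_sub_sub_pow {ℓ k n : ℕ}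
    (heq : ∑ i ∈ range (k + 1), (n + i) ^ ℓ = ∑ i ∈ Icc (k + 1) (2 * k), (n + i) ^ ℓ) :
    ((n + k : ℕ) : ℝ) ^ ℓ =
      ∑ j ∈ range k, ((((n + k : ℕ) : ℝ) + (j + 1)) ^ ℓ - (((n + k : ℕ) : ℝ) - (j + 1)) ^ ℓ) := by
  have hlow : ∑ i ∈ range (k + 1), (n + i) ^ ℓ =
      ∑ j ∈ range k, (n + (k - (j + 1))) ^ ℓ + (n + k) ^ ℓ := by
    rw [← sum_range_reflect, sum_range_succ']
    simp only [Nat.add_sub_cancel, Nat.sub_zero]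
  have hup : ∑ i ∈ Icc (k + 1) (2 * k), (n + i) ^ ℓ = ∑ j ∈ range k, (n + (k + 1 + j)) ^ ℓ := by
    rw [← Ico_add_one_right_eq_Icc, sum_Ico_eq_sum_range, show 2 * k + 1 - (k + 1) = k by omega]
  rw [hlow, hup] at heq
  have hreal := congrArg (Nat.cast : ℕ → ℝ) heq
  push_cast at hreal ⊢
  rw [sum_sub_distrib, eq_sub_iff_add_eq']
  convert hreal using 2
  · refine sum_congr rfl fun j hj => ?_
    rw [Nat.cast_sub (mem_range.mp hj)]
    push_cast
    ring
  · ring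

theorem add_le_of_sq_mul_sub_ge {L a W : ℝ} (ha : 0 ≤ a) (haL : 24 * a ≤ L) (hW : 0 < W)
    (h : L ^ 2 * a ≤ W ^ 2 * (W - L)) : L + 11 / 12 * a ≤ W := by
  have hW2 : 0 < W ^ 2 := by positivity
  have hLW : L ≤ W := by nlinarith [mul_nonneg (sq_nonneg L) ha]
  by_contra! hlt
  have hWsq : W ^ 2 ≤ (299 / 288 * L) ^ 2 := pow_le_pow_left₀ hW.le (by linarith) 2
  have : W ^ 2 * (W - L) < W ^ 2 * (11 / 12 * a) := mul_lt_mul_of_pos_left (by linarith) hW2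
  nlinarith [mul_le_mul_of_nonneg_right hWsq (by positivity : (0 : ℝ) ≤ 11 / 12 * a)]

theorem w_ge_lower_general (ℓ k n w : ℕ) (hℓ : 3 ≤ ℓ) (hk : 0 < k)
    (hw : w = n + k)
    (heq : ∑ i ∈ Finset.range (k + 1), (n + i) ^ ℓ =
        ∑ i ∈ Finset.Icc (k + 1) (2 * k), (n + i) ^ ℓ)
    (K a : ℝ) (hK : K = (k : ℝ) * ((k : ℝ) + 1))
    (ha : a = ((ℓ : ℝ) - 1) * ((ℓ : ℝ) - 2) / (12 * (ℓ : ℝ))) :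
    (ℓ : ℝ) * K + 11 / 12 * a ≤ (w : ℝ) := by
  subst hw
  have hpow := pow_eq_sum_add_pow_sub_sub_pow heq
  set W : ℝ := ((n + k : ℕ) : ℝ)
  have hW : 0 < W := Nat.cast_pos.mpr (by omega)
  have hℓ' : (3 : ℝ) ≤ ℓ := by exact_mod_cast hℓ
  have hcubic : ℓ * K * W ^ 2 + ℓ.choose 3 * K ^ 2 / 2 ≤ W ^ 3 := by
    have hsum := sum_add_pow_sub_sub_pow_ge hW.le hℓ k
    rw [← hpow, ← hK, ← pow_sub_mul_pow W hℓ, ← pow_sub_mul_pow W (by omega : 2 ≤ ℓ - 1),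
      show ℓ - 1 - 2 = ℓ - 3 by omega] at hsum
    refine le_of_mul_le_mul_left ?_ (pow_pos hW (ℓ - 3))
    linarith
  refine add_le_of_sq_mul_sub_ge (L := ℓ * K) ?_ ?_ hW ?_
  · rw [ha]
    exact div_nonneg (mul_nonneg (by linarith) (by linarith)) (by positivity)
  · have hK2 : (2 : ℝ) ≤ k * (k + 1) := by nlinarith [(Nat.one_le_cast.mpr hk : (1 : ℝ) ≤ k)]
    rw [ha, hK, mul_div_assoc', div_le_iff₀ (by positivity)]
    nlinarith [mul_le_mul_of_nonneg_left hK2 (sq_nonneg (ℓ : ℝ))]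
  · rw [Nat.cast_choose_three] at hcubic
    rw [ha]
    field_simp
    linarith

/-- If `ℓ ≥ 3` and `(k, n)` is a positive solution of equation (1), with `w = n + k`,
`K = k(k+1)` and `a = (ℓ-1)(ℓ-2)/(12ℓ)`, then `w ≥ ℓK + (11/12)a` as real numbers. -/
theorem w_ge_lower (ℓ k n w : ℕ) (hℓ : 3 ≤ ℓ) (hk : 0 < k) (hn : 0 < n)
    (hw : w = n + k)
    (heq : ∑ i ∈ Finset.range (k + 1), (n + i) ^ ℓ =
        ∑ i ∈ Finset.Icc (k + 1) (2 * k), (n + i) ^ ℓ)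
    (K a : ℝ) (hK : K = (k : ℝ) * ((k : ℝ) + 1))
    (ha : a = ((ℓ : ℝ) - 1) * ((ℓ : ℝ) - 2) / (12 * (ℓ : ℝ))) :
    (ℓ : ℝ) * K + 11 / 12 * a ≤ (w : ℝ) :=
  w_ge_lower_general ℓ k n w hℓ hk hw heq K a hK ha
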